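/- Let 0 ≠ τ ∈ ℝ^{m1}⊗ℝ^{m2}⊗ℝ^{m3} and p≤m1, q≤m2, r≤m3. A triple of subspaces (U,V,W) ∈ Gr(p,ℝ^{m1})×Gr(q,ℝ^{m2})×Gr(r,ℝ^{m3}) is a critical point of the function (X,Y,Z) ↦ ‖P_{X⊗Y⊗Z}(τ)‖² if and only if: (1) U is spanned by p left singular vectors of the map τ(V,W): ℝ^{m1} → V⊗W; (2) V is spanned by q left singular vectors of τ(U,W): ℝ^{m2} → U⊗W; and (3) W is spanned by r left singular vectors of τ(U,V): ℝ^{m3} → U⊗V. -/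

import Mathlib

/-!
Along a differentiable curve of orthonormal frames, `‖P_{X⊗Y⊗Z}(τ)‖²` is the sum of the
squares of the trilinear coefficients `⟨τ, x_l ⊗ y_m ⊗ z_n⟩`, so its derivative splits as
`2 Σ ⟨x'_l, B₁ x_l⟩ + 2 Σ ⟨y'_m, B₂ y_m⟩ + 2 Σ ⟨z'_n, B₃ z_n⟩`, where `B₁ = A₁ A₁ᵀ` is the Gram
matrix of the unfolding `τ(Y,Z)` and similarly for `B₂, B₃`. Freezing two of the frames
isolates each term, so `(U,V,W)` is critical iff each frame is a critical point of the trace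
`x ↦ Σ ⟨x_l, B x_l⟩` for its own `B`.

For symmetric `B` the latter says exactly that `span x` is `B`-invariant: rotating `x_l` towards
a unit vector `e ⟂ span x` has derivative `2 ⟨e, B x_l⟩`; conversely the derivative of a curve of
orthonormal frames is skew, `⟨x'_l, x_s⟩ = -⟨x_l, x'_s⟩`, and pairs to zero against the
symmetric matrix `⟨B x_l, x_s⟩`. Finally, by the spectral theorem for the restriction of `B`, a
`B`-invariant subspace is spanned by eigenvectors of `B`.
-/

open Matrix

/-- An orthonormal frame in `ℝ^m`. -/
def IsOrthonormalFrame {m i : ℕ} (x : Fin i → Fin m → ℝ) : Prop :=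
  ∀ s t, x s ⬝ᵥ x t = if s = t then (1 : ℝ) else 0

/-- `‖P_{X⊗Y⊗Z}(τ)‖²` expressed through orthonormal frames `x, y, z` of `X, Y, Z`:
`Σ_{l,m,n} ⟨τ, x_l ⊗ y_m ⊗ z_n⟩²`. -/
def projNormSq3 {m₁ m₂ m₃ p q r : ℕ} (τ : Fin m₁ → Fin m₂ → Fin m₃ → ℝ)
    (x : Fin p → Fin m₁ → ℝ) (y : Fin q → Fin m₂ → ℝ) (z : Fin r → Fin m₃ → ℝ) : ℝ :=
  ∑ l, ∑ m, ∑ n, (∑ i, ∑ j, ∑ k, τ i j k * x l i * y m j * z n k) ^ 2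

/-- The unfolding matrix of `τ(Y,Z) : ℝ^{m₁} → Y ⊗ Z` in the frames `y, z`:
`A₁[i, (m,n)] = Σ_{j,k} τ_{ijk} y_m(j) z_n(k)`; left singular vectors of `τ(Y,Z)` are
the eigenvectors of `A₁ A₁ᵀ`. -/
def unfold1 {m₁ m₂ m₃ q r : ℕ} (τ : Fin m₁ → Fin m₂ → Fin m₃ → ℝ)
    (y : Fin q → Fin m₂ → ℝ) (z : Fin r → Fin m₃ → ℝ) :
    Matrix (Fin m₁) (Fin q × Fin r) ℝ :=
  Matrix.of fun i mn => ∑ j, ∑ k, τ i j k * y mn.1 j * z mn.2 k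

open Submodule in
theorem LinearMap.IsSymmetric.exists_eigenbasis_of_invariant {𝕜 E : Type*} [RCLike 𝕜]
    [NormedAddCommGroup E] [InnerProductSpace 𝕜 E] [FiniteDimensional 𝕜 E]
    {T : E →ₗ[𝕜] E} (hT : T.IsSymmetric) {V : Submodule 𝕜 E} (hV : ∀ v ∈ V, T v ∈ V)
    {n : ℕ} (hn : Module.finrank 𝕜 V = n) :
    ∃ w : Fin n → E, LinearIndependent 𝕜 w ∧ (∀ i, ∃ μ : 𝕜, T (w i) = μ • w i) ∧
      span 𝕜 (Set.range w) = V := by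
  have hTV := hT.restrict_invariant hV
  let b := hTV.eigenvectorBasis hn
  refine ⟨fun i => b i, b.toBasis.linearIndependent.map' V.subtype V.ker_subtype,
    fun i => ⟨_, congrArg Subtype.val (hTV.apply_eigenvectorBasis hn i)⟩, ?_⟩
  have := congrArg (map V.subtype) b.toBasis.span_eq
  rwa [map_span, Submodule.map_top, range_subtype, ← Set.range_comp] at this

namespace Matrix

variable {𝕜 n : Type*} [RCLike 𝕜] [Fintype n] {B : Matrix n n 𝕜}

open Submodule

theorem mulVec_mem_of_mem_span {ι : Type*} {x : ι → n → 𝕜}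
    (hinv : ∀ l, B *ᵥ x l ∈ span 𝕜 (Set.range x)) {v : n → 𝕜} (hv : v ∈ span 𝕜 (Set.range x)) : B *ᵥ v ∈ span 𝕜 (Set.range x) :=
  (span_le (p := (span 𝕜 (Set.range x)).comap B.mulVecLin)).mpr
    (Set.range_subset_iff.mpr hinv) hv

variable [DecidableEq n] {p : ℕ} {x : Fin p → n → 𝕜}

theorem exists_eigenbasis_of_mulVec_mem_span (hB : B.IsHermitian) (hx : LinearIndependent 𝕜 x)
    (hinv : ∀ l, B *ᵥ x l ∈ span 𝕜 (Set.range x)) :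
    ∃ w : Fin p → n → 𝕜, LinearIndependent 𝕜 w ∧ (∀ l, ∃ μ : 𝕜, B *ᵥ w l = μ • w l) ∧
      span 𝕜 (Set.range w) = span 𝕜 (Set.range x) := by
  let e := WithLp.linearEquiv 2 𝕜 (n → 𝕜)
  let V := (span 𝕜 (Set.range x)).map e.symm.toLinearMap
  have hV : ∀ v ∈ V, B.toEuclideanLin v ∈ V := by
    rintro _ ⟨u, hu, rfl⟩
    exact ⟨_, mulVec_mem_of_mem_span hinv hu, rfl⟩
  have hn : Module.finrank 𝕜 V = p := by
    rw [LinearEquiv.finrank_map_eq, finrank_span_eq_card hx, Fintype.card_fin]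
  obtain ⟨w, hwli, hweig, hwspan⟩ :=
    (isSymmetric_toEuclideanLin_iff.mpr hB).exists_eigenbasis_of_invariant hV hn
  refine ⟨e ∘ w, hwli.map' e.toLinearMap e.ker, fun l => ?_, ?_⟩
  · obtain ⟨μ, hμ⟩ := hweig l
    exact ⟨μ, congrArg e hμ⟩
  · rw [Set.range_comp, ← LinearEquiv.coe_coe, ← map_span, hwspan]
    exact (map_symm_eq_iff e).mp rfl

theorem exists_eigenbasis_iff_mulVec_mem_span (hB : B.IsHermitian)
    (hx : LinearIndependent 𝕜 x) :
    (∃ w : Fin p → n → 𝕜, LinearIndependent 𝕜 w ∧ (∀ l, ∃ μ : 𝕜, B *ᵥ w l = μ • w l) ∧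
      span 𝕜 (Set.range w) = span 𝕜 (Set.range x)) ↔
    ∀ l, B *ᵥ x l ∈ span 𝕜 (Set.range x) := by
  refine ⟨fun ⟨w, _, heig, hspan⟩ l => ?_, exists_eigenbasis_of_mulVec_mem_span hB hx⟩
  have hxl : x l ∈ span 𝕜 (Set.range w) := hspan ▸ subset_span ⟨l, rfl⟩
  rw [← hspan]
  refine mulVec_mem_of_mem_span (fun s => ?_) hxl
  obtain ⟨μ, hμ⟩ := heig s
  rw [hμ]
  exact smul_mem _ _ (subset_span ⟨s, rfl⟩)

theorem isHermitian_mul_transpose_self {m κ : Type*} [Fintype κ] (A : Matrix m κ ℝ) :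
    (A * Aᵀ).IsHermitian := by
  simpa [conjTranspose_eq_transpose_of_trivial] using isHermitian_mul_conjTranspose_self A

end Matrix

theorem sum_sum_mul_eq_zero_of_symm_of_antisymm {ι R : Type*} [Fintype ι] [CommRing R]
    [NoZeroDivisors R] [CharZero R] {c d : ι → ι → R} (hc : ∀ i j, c i j = c j i)
    (hd : ∀ i j, d i j = -d j i) : ∑ i, ∑ j, c i j * d i j = 0 := by
  refine CharZero.eq_neg_self_iff.mp ?_
  calc ∑ i, ∑ j, c i j * d i j = ∑ j, ∑ i, c j i * -d j i := by
        rw [Finset.sum_comm]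
        exact Finset.sum_congr rfl fun j _ => Finset.sum_congr rfl fun i _ => by rw [hc, hd]
    _ = -∑ i, ∑ j, c i j * d i j := by simp only [mul_neg, Finset.sum_neg_distrib]

section Frame

variable {m p : ℕ} {x : Fin p → Fin m → ℝ}

theorem IsOrthonormalFrame.sum_smul_dotProduct (hx : IsOrthonormalFrame x) (a : Fin p → ℝ)
    (s : Fin p) : (∑ l, a l • x l) ⬝ᵥ x s = a s := by
  simp [sum_dotProduct, hx _ s]

theorem IsOrthonormalFrame.linearIndependent (hx : IsOrthonormalFrame x) :
    LinearIndependent ℝ x :=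
  Fintype.linearIndependent_iff.mpr fun a ha s => by
    rw [← hx.sum_smul_dotProduct a s, ha, zero_dotProduct]

theorem IsOrthonormalFrame.eq_sum_of_mem_span (hx : IsOrthonormalFrame x) {v : Fin m → ℝ}
    (hv : v ∈ Submodule.span ℝ (Set.range x)) : v = ∑ s, (v ⬝ᵥ x s) • x s := by
  obtain ⟨a, rfl⟩ := (Submodule.mem_span_range_iff_exists_fun ℝ).1 hv
  simp only [hx.sum_smul_dotProduct]

theorem IsOrthonormalFrame.mem_span_of_forall_unit (hx : IsOrthonormalFrame x) {v : Fin m → ℝ}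
    (h : ∀ e : Fin m → ℝ, e ⬝ᵥ e = 1 → (∀ s, e ⬝ᵥ x s = 0) → e ⬝ᵥ v = 0) :
    v ∈ Submodule.span ℝ (Set.range x) := by
  set r := v - ∑ s, (v ⬝ᵥ x s) • x s
  have hr : ∀ s, r ⬝ᵥ x s = 0 := fun s => by
    rw [sub_dotProduct, hx.sum_smul_dotProduct, sub_self]
  have hrv : r ⬝ᵥ v = 0 := by
    by_cases hr0 : r = 0
    · rw [hr0, zero_dotProduct]
    have hpos : 0 < r ⬝ᵥ r := dotProduct_self_star_pos_iff.mpr hr0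
    have hunit := h ((√(r ⬝ᵥ r))⁻¹ • r) (by
      rw [smul_dotProduct, dotProduct_smul, smul_smul, smul_eq_mul, ← mul_inv,
        Real.mul_self_sqrt hpos.le, inv_mul_cancel₀ hpos.ne']) (fun s => by
      rw [smul_dotProduct, hr, smul_zero])
    rw [smul_dotProduct, smul_eq_mul] at hunit
    exact (mul_eq_zero.mp hunit).resolve_left (by positivity)
  have hrr : r ⬝ᵥ r = 0 := by
    rw [dotProduct_sub, hrv, dotProduct_sum]
    simp [dotProduct_smul, hr]
  have hv : v = ∑ s, (v ⬝ᵥ x s) • x s := sub_eq_zero.mp (dotProduct_self_eq_zero.mp hrr)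
  rw [hv]
  exact Submodule.sum_mem _ fun s _ => Submodule.smul_mem _ _ (Submodule.subset_span ⟨s, rfl⟩)

theorem dotProduct_deriv_add_eq_zero {c : ℝ → Fin p → Fin m → ℝ}
    (hd : ∀ l i, Differentiable ℝ fun t => c t l i) (hf : ∀ t, IsOrthonormalFrame (c t))
    (t₀ : ℝ) (l s : Fin p) :
    (fun i => deriv (fun t => c t l i) t₀) ⬝ᵥ c t₀ s
      + c t₀ l ⬝ᵥ (fun i => deriv (fun t => c t s i) t₀) = 0 := by
  have hderiv : HasDerivAt (fun t => c t l ⬝ᵥ c t s)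
      ((fun i => deriv (fun t => c t l i) t₀) ⬝ᵥ c t₀ s
        + c t₀ l ⬝ᵥ (fun i => deriv (fun t => c t s i) t₀)) t₀ := by
    simp only [dotProduct, ← Finset.sum_add_distrib]
    exact HasDerivAt.fun_sum fun i _ => (hd l i t₀).hasDerivAt.mul (hd s i t₀).hasDerivAt
  have hconst : (fun t => c t l ⬝ᵥ c t s) = fun _ => if l = s then 1 else 0 :=
    funext fun t => hf t l s
  rw [hconst] at hderiv
  exact hderiv.unique (hasDerivAt_const _ _)

theorem IsOrthonormalFrame.sum_dotProduct_mulVec_eq_zero (hx : IsOrthonormalFrame x)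
    {B : Matrix (Fin m) (Fin m) ℝ} (hB : B.IsHermitian)
    (hinv : ∀ l, B *ᵥ x l ∈ Submodule.span ℝ (Set.range x)) {x' : Fin p → Fin m → ℝ}
    (hskew : ∀ l s, x' l ⬝ᵥ x s + x l ⬝ᵥ x' s = 0) :
    ∑ l, x' l ⬝ᵥ B *ᵥ x l = 0 := by
  have hBsymm : ∀ v w : Fin m → ℝ, v ⬝ᵥ B *ᵥ w = w ⬝ᵥ B *ᵥ v := fun v w => by
    rw [dotProduct_mulVec, dotProduct_comm, ← mulVec_transpose,
      ← conjTranspose_eq_transpose_of_trivial, hB.eq]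
  calc ∑ l, x' l ⬝ᵥ B *ᵥ x l = ∑ l, ∑ s, (B *ᵥ x l ⬝ᵥ x s) * (x' l ⬝ᵥ x s) := by
        refine Finset.sum_congr rfl fun l _ => ?_
        conv_lhs => rw [hx.eq_sum_of_mem_span (hinv l), dotProduct_sum]
        simp only [dotProduct_smul, smul_eq_mul]
    _ = 0 := sum_sum_mul_eq_zero_of_symm_of_antisymm (fun l s => by
        rw [dotProduct_comm, hBsymm, dotProduct_comm]) fun l s => by
        rw [dotProduct_comm (x' s), ← add_eq_zero_iff_eq_neg]; exact hskew l s

noncomputable def rotateFrame (x : Fin p → Fin m → ℝ) (l₀ : Fin p) (e : Fin m → ℝ) (t : ℝ) :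
    Fin p → Fin m → ℝ :=
  Function.update x l₀ (Real.cos t • x l₀ + Real.sin t • e)

theorem rotateFrame_zero (x : Fin p → Fin m → ℝ) (l₀ : Fin p) (e : Fin m → ℝ) :
    rotateFrame x l₀ e 0 = x := by
  simp [rotateFrame]

theorem hasDerivAt_rotateFrame (x : Fin p → Fin m → ℝ) (l₀ : Fin p) (e : Fin m → ℝ)
    (l : Fin p) (i : Fin m) (t : ℝ) :
    HasDerivAt (fun t => rotateFrame x l₀ e t l i)
      (Function.update (0 : Fin p → Fin m → ℝ) l₀ (-Real.sin t • x l₀ + Real.cos t • e) l i)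
      t := by
  by_cases hl : l = l₀
  · subst hl
    simp only [rotateFrame, Function.update_self, Pi.add_apply, Pi.smul_apply, smul_eq_mul]
    exact ((Real.hasDerivAt_cos t).mul_const _).add ((Real.hasDerivAt_sin t).mul_const _)
  · simp only [rotateFrame, Function.update_of_ne hl, Pi.zero_apply]
    exact hasDerivAt_const _ _

theorem isOrthonormalFrame_rotateFrame (hx : IsOrthonormalFrame x) (l₀ : Fin p)
    {e : Fin m → ℝ} (he : e ⬝ᵥ e = 1) (hex : ∀ s, e ⬝ᵥ x s = 0) (t : ℝ) :
    IsOrthonormalFrame (rotateFrame x l₀ e t) := by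
  have hxe : ∀ s, x s ⬝ᵥ e = 0 := fun s => by rw [dotProduct_comm, hex]
  intro s s'
  by_cases hs : s = l₀ <;> by_cases hs' : s' = l₀
  · simp [rotateFrame, hs, hs', add_dotProduct, dotProduct_add, hx l₀ l₀, he, hex, hxe]
    linear_combination Real.cos_sq_add_sin_sq t
  · simp [rotateFrame, hs, Function.update_of_ne hs', add_dotProduct, hx l₀ s', hex,
      Ne.symm hs']
  · simp [rotateFrame, hs', dotProduct_add, hx s l₀, hxe, hs]
  · simp [rotateFrame, Function.update_of_ne hs, Function.update_of_ne hs', hx s s']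

/-- `x` is a critical point of the trace `x ↦ Σ_l ⟨x_l, B x_l⟩` on orthonormal frames: the sum
below is half the derivative of the trace along `c` at `0`. -/
def IsFrameCritical (B : Matrix (Fin m) (Fin m) ℝ) (x : Fin p → Fin m → ℝ) : Prop :=
  ∀ c : ℝ → Fin p → Fin m → ℝ, (∀ l i, Differentiable ℝ fun t => c t l i) →
    (∀ t, IsOrthonormalFrame (c t)) → c 0 = x →
    ∑ l, (fun i => deriv (fun t => c t l i) 0) ⬝ᵥ B *ᵥ x l = 0

theorem IsOrthonormalFrame.isFrameCritical_iff (hx : IsOrthonormalFrame x)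
    {B : Matrix (Fin m) (Fin m) ℝ} (hB : B.IsHermitian) :
    IsFrameCritical B x ↔ ∀ l, B *ᵥ x l ∈ Submodule.span ℝ (Set.range x) := by
  constructor
  · intro hcrit l₀
    refine hx.mem_span_of_forall_unit fun e he hex => ?_
    have h := hcrit (rotateFrame x l₀ e)
      (fun l i t => (hasDerivAt_rotateFrame x l₀ e l i t).differentiableAt)
      (isOrthonormalFrame_rotateFrame hx l₀ he hex) (rotateFrame_zero x l₀ e)
    have hderiv : ∀ l, (fun i => deriv (fun t => rotateFrame x l₀ e t l i) 0)
        = if l = l₀ then e else 0 := fun l => by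
      funext i
      rw [(hasDerivAt_rotateFrame x l₀ e l i 0).deriv]
      by_cases hl : l = l₀ <;> simp [hl]
    rwa [Fintype.sum_eq_single l₀ fun l hl => by rw [hderiv, if_neg hl, zero_dotProduct],
      hderiv, if_pos rfl] at h
  · rintro hinv c hd hf rfl
    exact (hf 0).sum_dotProduct_mulVec_eq_zero hB hinv (dotProduct_deriv_add_eq_zero hd hf 0)

end Frame

section Tensor

variable {m₁ m₂ m₃ p q r : ℕ} (τ : Fin m₁ → Fin m₂ → Fin m₃ → ℝ)

def tensorContract (x : Fin p → Fin m₁ → ℝ) (y : Fin q → Fin m₂ → ℝ)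
    (z : Fin r → Fin m₃ → ℝ) (l : Fin p) (m : Fin q) (n : Fin r) : ℝ :=
  ∑ i, ∑ j, ∑ k, τ i j k * x l i * y m j * z n k

theorem tensorContract_eq_vecMul (x : Fin p → Fin m₁ → ℝ) (y : Fin q → Fin m₂ → ℝ)
    (z : Fin r → Fin m₃ → ℝ) (l : Fin p) (m : Fin q) (n : Fin r) :
    tensorContract τ x y z l m n = (x l ᵥ* unfold1 τ y z) (m, n) := by
  simp only [tensorContract, vecMul, dotProduct, unfold1, of_apply, Finset.mul_sum]
  exact Finset.sum_congr rfl fun i _ => Finset.sum_congr rfl fun j _ =>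
    Finset.sum_congr rfl fun k _ => by ring

theorem sum_tensorContract_mul_fst (x u : Fin p → Fin m₁ → ℝ) (y : Fin q → Fin m₂ → ℝ)
    (z : Fin r → Fin m₃ → ℝ) :
    ∑ l, ∑ m, ∑ n, tensorContract τ x y z l m n * tensorContract τ u y z l m n
      = ∑ l, u l ⬝ᵥ (unfold1 τ y z * (unfold1 τ y z)ᵀ) *ᵥ x l := by
  refine Finset.sum_congr rfl fun l _ => ?_
  simp only [tensorContract_eq_vecMul, ← Fintype.sum_prod_type', ← mulVec_mulVec,
    dotProduct_mulVec, mulVec_transpose]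
  exact Finset.sum_congr rfl fun _ _ => mul_comm _ _

theorem tensorContract_swap (x : Fin p → Fin m₁ → ℝ) (y : Fin q → Fin m₂ → ℝ)
    (z : Fin r → Fin m₃ → ℝ) (l : Fin p) (m : Fin q) (n : Fin r) :
    tensorContract τ x y z l m n = tensorContract (fun j i k => τ i j k) y x z m l n := by
  rw [tensorContract, Finset.sum_comm]
  exact Finset.sum_congr rfl fun j _ => Finset.sum_congr rfl fun i _ =>
    Finset.sum_congr rfl fun k _ => by ring

theorem tensorContract_rotate (x : Fin p → Fin m₁ → ℝ) (y : Fin q → Fin m₂ → ℝ)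
    (z : Fin r → Fin m₃ → ℝ) (l : Fin p) (m : Fin q) (n : Fin r) :
    tensorContract τ x y z l m n = tensorContract (fun k i j => τ i j k) z x y n l m := by
  calc tensorContract τ x y z l m n = ∑ i, ∑ k, ∑ j, τ i j k * x l i * y m j * z n k :=
        Finset.sum_congr rfl fun i _ => Finset.sum_comm
    _ = ∑ k, ∑ i, ∑ j, τ i j k * x l i * y m j * z n k := Finset.sum_comm
    _ = _ := Finset.sum_congr rfl fun k _ => Finset.sum_congr rfl fun i _ =>
        Finset.sum_congr rfl fun j _ => by ring

theorem sum_tensorContract_mul_snd (x : Fin p → Fin m₁ → ℝ) (y v : Fin q → Fin m₂ → ℝ)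
    (z : Fin r → Fin m₃ → ℝ) :
    ∑ l, ∑ m, ∑ n, tensorContract τ x y z l m n * tensorContract τ x v z l m n
      = ∑ m, v m ⬝ᵥ (unfold1 (fun j i k => τ i j k) x z *
          (unfold1 (fun j i k => τ i j k) x z)ᵀ) *ᵥ y m := by
  simp only [tensorContract_swap τ]
  rw [Finset.sum_comm]
  exact sum_tensorContract_mul_fst _ y v x z

theorem sum_tensorContract_mul_thd (x : Fin p → Fin m₁ → ℝ) (y : Fin q → Fin m₂ → ℝ)
    (z v : Fin r → Fin m₃ → ℝ) :
    ∑ l, ∑ m, ∑ n, tensorContract τ x y z l m n * tensorContract τ x y v l m n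
      = ∑ n, v n ⬝ᵥ (unfold1 (fun k i j => τ i j k) x y *
          (unfold1 (fun k i j => τ i j k) x y)ᵀ) *ᵥ z n := by
  simp only [tensorContract_rotate τ]
  rw [← sum_tensorContract_mul_fst]
  exact (Finset.sum_congr rfl fun l _ => Finset.sum_comm).trans Finset.sum_comm

variable {cx : ℝ → Fin p → Fin m₁ → ℝ} {cy : ℝ → Fin q → Fin m₂ → ℝ}
  {cz : ℝ → Fin r → Fin m₃ → ℝ} {x' : Fin p → Fin m₁ → ℝ} {y' : Fin q → Fin m₂ → ℝ}
  {z' : Fin r → Fin m₃ → ℝ} {t₀ : ℝ}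

theorem hasDerivAt_tensorContract (hx : ∀ l i, HasDerivAt (fun t => cx t l i) (x' l i) t₀)
    (hy : ∀ m j, HasDerivAt (fun t => cy t m j) (y' m j) t₀)
    (hz : ∀ n k, HasDerivAt (fun t => cz t n k) (z' n k) t₀) (l : Fin p) (m : Fin q)
    (n : Fin r) :
    HasDerivAt (fun t => tensorContract τ (cx t) (cy t) (cz t) l m n)
      (tensorContract τ x' (cy t₀) (cz t₀) l m n + tensorContract τ (cx t₀) y' (cz t₀) l m n
        + tensorContract τ (cx t₀) (cy t₀) z' l m n) t₀ := by
  simp only [tensorContract, ← Finset.sum_add_distrib]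
  refine HasDerivAt.fun_sum fun i _ => HasDerivAt.fun_sum fun j _ =>
    HasDerivAt.fun_sum fun k _ => ?_
  exact ((((hx l i).const_mul (τ i j k)).fun_mul (hy m j)).fun_mul (hz n k)).congr_deriv
    (by ring)

theorem hasDerivAt_projNormSq3 (hx : ∀ l i, HasDerivAt (fun t => cx t l i) (x' l i) t₀)
    (hy : ∀ m j, HasDerivAt (fun t => cy t m j) (y' m j) t₀)
    (hz : ∀ n k, HasDerivAt (fun t => cz t n k) (z' n k) t₀) :
    HasDerivAt (fun t => projNormSq3 τ (cx t) (cy t) (cz t))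
      (2 * ∑ l, x' l ⬝ᵥ (unfold1 τ (cy t₀) (cz t₀) * (unfold1 τ (cy t₀) (cz t₀))ᵀ) *ᵥ cx t₀ l
        + 2 * ∑ m, y' m ⬝ᵥ (unfold1 (fun j i k => τ i j k) (cx t₀) (cz t₀) *
            (unfold1 (fun j i k => τ i j k) (cx t₀) (cz t₀))ᵀ) *ᵥ cy t₀ m
        + 2 * ∑ n, z' n ⬝ᵥ (unfold1 (fun k i j => τ i j k) (cx t₀) (cy t₀) *
            (unfold1 (fun k i j => τ i j k) (cx t₀) (cy t₀))ᵀ) *ᵥ cz t₀ n) t₀ := by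
  rw [← sum_tensorContract_mul_fst, ← sum_tensorContract_mul_snd, ← sum_tensorContract_mul_thd]
  show HasDerivAt (fun t => ∑ l, ∑ m, ∑ n, tensorContract τ (cx t) (cy t) (cz t) l m n ^ 2) _ t₀
  refine (HasDerivAt.fun_sum fun l _ => HasDerivAt.fun_sum fun m _ => HasDerivAt.fun_sum
    fun n _ => (hasDerivAt_tensorContract τ hx hy hz l m n).fun_pow 2).congr_deriv ?_
  simp only [Finset.mul_sum, ← Finset.sum_add_distrib]
  exact Finset.sum_congr rfl fun l _ => Finset.sum_congr rfl fun m _ =>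
    Finset.sum_congr rfl fun n _ => by push_cast; ring

def IsCriticalTriple (x : Fin p → Fin m₁ → ℝ) (y : Fin q → Fin m₂ → ℝ)
    (z : Fin r → Fin m₃ → ℝ) : Prop :=
  ∀ (cx : ℝ → Fin p → Fin m₁ → ℝ) (cy : ℝ → Fin q → Fin m₂ → ℝ)
      (cz : ℝ → Fin r → Fin m₃ → ℝ),
    (∀ l j, Differentiable ℝ fun t => cx t l j) →
    (∀ l j, Differentiable ℝ fun t => cy t l j) →
    (∀ l j, Differentiable ℝ fun t => cz t l j) →
    (∀ t, IsOrthonormalFrame (cx t)) → (∀ t, IsOrthonormalFrame (cy t)) →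
    (∀ t, IsOrthonormalFrame (cz t)) →
    cx 0 = x → cy 0 = y → cz 0 = z →
    deriv (fun t => projNormSq3 τ (cx t) (cy t) (cz t)) 0 = 0

theorem isCriticalTriple_iff {x : Fin p → Fin m₁ → ℝ} {y : Fin q → Fin m₂ → ℝ}
    {z : Fin r → Fin m₃ → ℝ} (hx : IsOrthonormalFrame x) (hy : IsOrthonormalFrame y)
    (hz : IsOrthonormalFrame z) :
    IsCriticalTriple τ x y z ↔
      IsFrameCritical (unfold1 τ y z * (unfold1 τ y z)ᵀ) x ∧
      IsFrameCritical (unfold1 (fun j i k => τ i j k) x z *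
        (unfold1 (fun j i k => τ i j k) x z)ᵀ) y ∧
      IsFrameCritical (unfold1 (fun k i j => τ i j k) x y *
        (unfold1 (fun k i j => τ i j k) x y)ᵀ) z := by
  constructor
  · intro hcrit
    refine ⟨fun c hd hf h0 => ?_, fun c hd hf h0 => ?_, fun c hd hf h0 => ?_⟩
    · have h := hcrit c (fun _ => y) (fun _ => z) hd (fun _ _ => differentiable_const _)
        (fun _ _ => differentiable_const _) hf (fun _ => hy) (fun _ => hz) h0 rfl rfl
      rw [(hasDerivAt_projNormSq3 τ (cy := fun _ => y) (cz := fun _ => z)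
        (fun l i => (hd l i 0).hasDerivAt) (y' := 0) (z' := 0)
        (fun _ _ => hasDerivAt_const _ _) (fun _ _ => hasDerivAt_const _ _)).deriv, h0] at h
      simpa using h
    · have h := hcrit (fun _ => x) c (fun _ => z) (fun _ _ => differentiable_const _) hd
        (fun _ _ => differentiable_const _) (fun _ => hx) hf (fun _ => hz) rfl h0 rfl
      rw [(hasDerivAt_projNormSq3 τ (cx := fun _ => x) (cz := fun _ => z) (x' := 0) (z' := 0)
        (fun _ _ => hasDerivAt_const _ _) (fun l i => (hd l i 0).hasDerivAt)
        (fun _ _ => hasDerivAt_const _ _)).deriv, h0] at h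
      simpa using h
    · have h := hcrit (fun _ => x) (fun _ => y) c (fun _ _ => differentiable_const _)
        (fun _ _ => differentiable_const _) hd (fun _ => hx) (fun _ => hy) hf rfl rfl h0
      rw [(hasDerivAt_projNormSq3 τ (cx := fun _ => x) (cy := fun _ => y) (x' := 0) (y' := 0)
        (fun _ _ => hasDerivAt_const _ _) (fun _ _ => hasDerivAt_const _ _)
        (fun l i => (hd l i 0).hasDerivAt)).deriv, h0] at h
      simpa using h
  · rintro ⟨h₁, h₂, h₃⟩ cx cy cz hdx hdy hdz hfx hfy hfz rfl rfl rfl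
    rw [(hasDerivAt_projNormSq3 τ (fun l i => (hdx l i 0).hasDerivAt)
      (fun m j => (hdy m j 0).hasDerivAt) (fun n k => (hdz n k 0).hasDerivAt)).deriv,
      h₁ cx hdx hfx rfl, h₂ cy hdy hfy rfl, h₃ cz hdz hfz rfl]
    ring

end Tensor

theorem critical_point_characterization_3tensor_general (m₁ m₂ m₃ p q r : ℕ)
    (τ : Fin m₁ → Fin m₂ → Fin m₃ → ℝ)
    (x : Fin p → Fin m₁ → ℝ) (hx : IsOrthonormalFrame x)
    (y : Fin q → Fin m₂ → ℝ) (hy : IsOrthonormalFrame y)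
    (z : Fin r → Fin m₃ → ℝ) (hz : IsOrthonormalFrame z) :
    (∀ (cx : ℝ → Fin p → Fin m₁ → ℝ) (cy : ℝ → Fin q → Fin m₂ → ℝ)
        (cz : ℝ → Fin r → Fin m₃ → ℝ),
      (∀ l j, Differentiable ℝ fun t => cx t l j) →
      (∀ l j, Differentiable ℝ fun t => cy t l j) →
      (∀ l j, Differentiable ℝ fun t => cz t l j) →
      (∀ t, IsOrthonormalFrame (cx t)) → (∀ t, IsOrthonormalFrame (cy t)) →
      (∀ t, IsOrthonormalFrame (cz t)) →
      cx 0 = x → cy 0 = y → cz 0 = z →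
      deriv (fun t => projNormSq3 τ (cx t) (cy t) (cz t)) 0 = 0) ↔
    ((∃ w : Fin p → Fin m₁ → ℝ, LinearIndependent ℝ w ∧
        (∀ l, ∃ μ : ℝ, (unfold1 τ y z * (unfold1 τ y z)ᵀ).mulVec (w l) = μ • w l) ∧
        Submodule.span ℝ (Set.range w) = Submodule.span ℝ (Set.range x)) ∧
     (∃ w : Fin q → Fin m₂ → ℝ, LinearIndependent ℝ w ∧
        (∀ l, ∃ μ : ℝ, (unfold1 (fun j i k => τ i j k) x z *
            (unfold1 (fun j i k => τ i j k) x z)ᵀ).mulVec (w l) = μ • w l) ∧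
        Submodule.span ℝ (Set.range w) = Submodule.span ℝ (Set.range y)) ∧
     (∃ w : Fin r → Fin m₃ → ℝ, LinearIndependent ℝ w ∧
        (∀ l, ∃ μ : ℝ, (unfold1 (fun k i j => τ i j k) x y *
            (unfold1 (fun k i j => τ i j k) x y)ᵀ).mulVec (w l) = μ • w l) ∧
        Submodule.span ℝ (Set.range w) = Submodule.span ℝ (Set.range z))) := by
  refine (isCriticalTriple_iff τ hx hy hz).trans ?_
  rw [hx.isFrameCritical_iff (isHermitian_mul_transpose_self _),
    hy.isFrameCritical_iff (isHermitian_mul_transpose_self _),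
    hz.isFrameCritical_iff (isHermitian_mul_transpose_self _),
    exists_eigenbasis_iff_mulVec_mem_span (isHermitian_mul_transpose_self _) hx.linearIndependent,
    exists_eigenbasis_iff_mulVec_mem_span (isHermitian_mul_transpose_self _) hy.linearIndependent,
    exists_eigenbasis_iff_mulVec_mem_span (isHermitian_mul_transpose_self _) hz.linearIndependent]

/-- `(U,V,W)` is a critical point of `(X,Y,Z) ↦ ‖P_{X⊗Y⊗Z}(τ)‖²` on
`Gr(p,ℝ^{m₁})×Gr(q,ℝ^{m₂})×Gr(r,ℝ^{m₃})` (criticality tested along differentiable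
curves of orthonormal frames) iff `U` is spanned by `p` left singular vectors of
`τ(V,W)`, `V` by `q` left singular vectors of `τ(U,W)`, and `W` by `r` left singular
vectors of `τ(U,V)`. -/
theorem critical_point_characterization_3tensor (m₁ m₂ m₃ p q r : ℕ)
    (hp : p ≤ m₁) (hq : q ≤ m₂) (hr : r ≤ m₃)
    (τ : Fin m₁ → Fin m₂ → Fin m₃ → ℝ) (hτ : τ ≠ 0)
    (x : Fin p → Fin m₁ → ℝ) (hx : IsOrthonormalFrame x)
    (y : Fin q → Fin m₂ → ℝ) (hy : IsOrthonormalFrame y)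
    (z : Fin r → Fin m₃ → ℝ) (hz : IsOrthonormalFrame z) :
    (∀ (cx : ℝ → Fin p → Fin m₁ → ℝ) (cy : ℝ → Fin q → Fin m₂ → ℝ)
        (cz : ℝ → Fin r → Fin m₃ → ℝ),
      (∀ l j, Differentiable ℝ fun t => cx t l j) →
      (∀ l j, Differentiable ℝ fun t => cy t l j) →
      (∀ l j, Differentiable ℝ fun t => cz t l j) →
      (∀ t, IsOrthonormalFrame (cx t)) → (∀ t, IsOrthonormalFrame (cy t)) →
      (∀ t, IsOrthonormalFrame (cz t)) →
      cx 0 = x → cy 0 = y → cz 0 = z →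
      deriv (fun t => projNormSq3 τ (cx t) (cy t) (cz t)) 0 = 0) ↔
    ((∃ w : Fin p → Fin m₁ → ℝ, LinearIndependent ℝ w ∧
        (∀ l, ∃ μ : ℝ, (unfold1 τ y z * (unfold1 τ y z)ᵀ).mulVec (w l) = μ • w l) ∧
        Submodule.span ℝ (Set.range w) = Submodule.span ℝ (Set.range x)) ∧
     (∃ w : Fin q → Fin m₂ → ℝ, LinearIndependent ℝ w ∧
        (∀ l, ∃ μ : ℝ, (unfold1 (fun j i k => τ i j k) x z *
            (unfold1 (fun j i k => τ i j k) x z)ᵀ).mulVec (w l) = μ • w l) ∧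
        Submodule.span ℝ (Set.range w) = Submodule.span ℝ (Set.range y)) ∧
     (∃ w : Fin r → Fin m₃ → ℝ, LinearIndependent ℝ w ∧
        (∀ l, ∃ μ : ℝ, (unfold1 (fun k i j => τ i j k) x y *
            (unfold1 (fun k i j => τ i j k) x y)ᵀ).mulVec (w l) = μ • w l) ∧
        Submodule.span ℝ (Set.range w) = Submodule.span ℝ (Set.range z))) :=
  critical_point_characterization_3tensor_general m₁ m₂ m₃ p q r τ x hx y hy z hz
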